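/- Let x₀ > 0 and α₀ > 0 be constants such that (2 J₁(t)/t)² ≤ cos²(α₀ t) for all 0 < t ≤ x₀, and (2 J₁(t)/t)² ≤ 8/(π t³) for all t ≥ x₀. Then S(x) := (1/π) ∫₀^π (2 J₁(x sin(θ/2)) / (x sin(θ/2)))² dθ satisfies limsup_{x→∞} x · S(x) ≤ (1/π) ( x₀ + sin(2 α₀ x₀)/(2 α₀) + 8/(π x₀²) ). In particular, with such constants there exist c₀ > 0 and X₀ > 0 such that S(x) ≤ c₀/x for all x ≥ X₀. -/

import Mathlib

open MeasureTheory ProbabilityTheory Real Filter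

/-- Bessel function of the first kind of integer order `n`:
`Jₙ(x) = (1/π) ∫₀^π cos(nθ − x sin θ) dθ`. -/
noncomputable def besselJ (n : ℕ) (x : ℝ) : ℝ :=
  (1 / π) * ∫ θ in (0:ℝ)..π, Real.cos (n * θ - x * Real.sin θ)

/-- The semicircle probability measure on ℝ, with density `(2/π)√(1 − z²)` on `[−1,1]`. -/
noncomputable def semicircleMeasure : Measure ℝ :=
  volume.withDensity (fun z => ENNReal.ofReal
    (if z ∈ Set.Icc (-1 : ℝ) 1 then (2 / π) * Real.sqrt (1 - z ^ 2) else 0))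

/-- `S(x) = (1/π) ∫₀^π (2J₁(x sin(θ/2)) / (x sin(θ/2)))² dθ`. -/
noncomputable def sidelobeIntegral (x : ℝ) : ℝ :=
  (1 / π) * ∫ θ in (0:ℝ)..π,
    (2 * besselJ 1 (x * Real.sin (θ / 2)) / (x * Real.sin (θ / 2))) ^ 2

lemma besselJ_continuous (n : ℕ) : Continuous (besselJ n) := by
  unfold besselJ
  apply Continuous.mul continuous_const
  apply intervalIntegral.continuous_parametric_intervalIntegral_of_continuous'
  fun_prop

lemma F_measurable : Measurable (fun t : ℝ => (2 * besselJ 1 t / t) ^ 2) :=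
  ((measurable_const.mul (besselJ_continuous 1).measurable).div measurable_id).pow_const 2

lemma my_abs_cos_sub_cos (a b : ℝ) : |Real.cos a - Real.cos b| ≤ |a - b| := by
  rw [Real.cos_sub_cos]
  have h1 : |Real.sin ((a+b)/2)| ≤ 1 := Real.abs_sin_le_one _
  have h2 : |Real.sin ((a-b)/2)| ≤ |(a-b)/2| := Real.abs_sin_le_abs
  rw [abs_div] at h2
  calc |(-2) * Real.sin ((a+b)/2) * Real.sin ((a-b)/2)|
      = 2 * |Real.sin ((a+b)/2)| * |Real.sin ((a-b)/2)| := by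
        rw [abs_mul, abs_mul]; norm_num
    _ ≤ 2 * 1 * (|a-b|/2) := by
        apply mul_le_mul _ (by simpa using h2) (abs_nonneg _) (by norm_num)
        nlinarith [abs_nonneg (Real.sin ((a+b)/2))]
    _ = |a - b| := by ring

lemma sub_cube_le_sin {t : ℝ} (h0 : 0 ≤ t) (h1 : t ≤ 1) : t - t^3/4 ≤ Real.sin t := by
  rcases eq_or_lt_of_le h0 with h | h
  · simp [← h]
  · have h3 := pow_pos h 3
    have := Real.sin_gt_sub_cube h
    linarith


noncomputable def Bfun (x₀ : ℝ) (x : ℝ) : ℝ := x * Real.arcsin (x₀ / x)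

noncomputable def Abound (x₀ α₀ δ : ℝ) (x : ℝ) : ℝ :=
  (1/π) * (Bfun x₀ x + Real.sin (2*α₀*Bfun x₀ x)/(2*α₀) + α₀*(Bfun x₀ x)^4/(8*x^2)
    + 8*(((1-δ^2/16)^3)⁻¹)/(π*x₀^2) + 8*(Real.sin (δ/2)^3)⁻¹/x^2)

lemma assemble (p α₀ x x₀ s K A C : ℝ) (hπ : p ≠ 0) (hx : x ≠ 0) (hα : α₀ ≠ 0) (hx₀ : x₀ ≠ 0) :
    (1/p) * (x * ((s + (1/2)*(A/(α₀*x) + α₀*x*(2*s)^4/64))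
      + (8/(p*x^3)) * (K*(x^2/x₀^2) + p*C)))
    = (1/p) * (x*s + A/(2*α₀) + α₀*(x*s)^4/(8*x^2) + 8*K/(p*x₀^2) + 8*C/x^2) := by
  rw [mul_add (8/(p*x^3))]
  have h1 : (8/(p*x^3)) * (p*C) = 8*C/x^3 := by field_simp
  rw [h1]
  field_simp
  ring

set_option maxHeartbeats 2000000 in
lemma key (x₀ α₀ δ : ℝ) (hx₀ : 0 < x₀) (hα₀ : 0 < α₀) (hδ : 0 < δ) (hδ1 : δ ≤ 1)
    (h₁ : ∀ t : ℝ, 0 < t → t ≤ x₀ → (2 * besselJ 1 t / t) ^ 2 ≤ Real.cos (α₀ * t) ^ 2)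
    (h₂ : ∀ t : ℝ, x₀ ≤ t → (2 * besselJ 1 t / t) ^ 2 ≤ 8 / (π * t ^ 3))
    (x : ℝ) (hxx : x₀ ≤ x) (hθδ : 2 * Real.arcsin (x₀ / x) ≤ δ) :
    x * sidelobeIntegral x ≤ Abound x₀ α₀ δ x := by
  have hπ : (0:ℝ) < π := Real.pi_pos
  have hπ3 : (3:ℝ) < π := Real.pi_gt_three
  have hx0 : 0 < x := lt_of_lt_of_le hx₀ hxx
  set u : ℝ := x₀ / x with hu_def
  set s : ℝ := Real.arcsin u with hs_def
  have hu0 : 0 < u := div_pos hx₀ hx0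
  have hu1 : u ≤ 1 := (div_le_one hx0).mpr hxx
  have hs0 : 0 < s := Real.arcsin_pos.mpr hu0
  have hsin : Real.sin s = u := Real.sin_arcsin (by linarith) hu1
  have hs2 : s ≤ π/2 := Real.arcsin_le_pi_div_two u
  have hus : u ≤ s := by rw [← hsin]; exact Real.sin_le hs0.le
  have h2sδ : 2*s ≤ δ := by rw [hs_def, hu_def]; exact hθδ
  have hδπ : δ ≤ π := by linarith
  have hxu : x * u = x₀ := by rw [hu_def]; field_simp
  set G : ℝ → ℝ := fun θ => (2 * besselJ 1 (x * Real.sin (θ / 2)) / (x * Real.sin (θ / 2))) ^ 2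
    with hG_def
  have hGmeas : Measurable G := F_measurable.comp (by fun_prop)
  set M : ℝ := max 1 (8/(π*x₀^3)) with hM_def
  have hFle : ∀ t : ℝ, 0 ≤ t → (2 * besselJ 1 t / t) ^ 2 ≤ M := by
    intro t ht
    rcases eq_or_lt_of_le ht with h | h
    · rw [← h, div_zero]
      norm_num
      exact le_trans zero_le_one (le_max_left _ _)
    rcases le_or_gt t x₀ with h' | h'
    · exact le_trans (h₁ t h h') (le_trans (Real.cos_sq_le_one _) (le_max_left _ _))
    · refine le_trans (h₂ t h'.le) (le_trans ?_ (le_max_right _ _))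
      have h3 : x₀^3 ≤ t^3 := pow_le_pow_left₀ hx₀.le h'.le 3
      gcongr
  have hGint : IntervalIntegrable G volume 0 π := by
    refine (intervalIntegrable_const (c := M)).mono_fun' hGmeas.aestronglyMeasurable.restrict ?_
    filter_upwards [ae_restrict_mem measurableSet_uIoc] with θ hθ
    rw [Set.uIoc_of_le hπ.le] at hθ
    have h1 : 0 ≤ Real.sin (θ/2) :=
      Real.sin_nonneg_of_nonneg_of_le_pi (by linarith [hθ.1]) (by linarith [hθ.2])
    have := hFle (x * Real.sin (θ/2)) (mul_nonneg hx0.le h1)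
    rw [Real.norm_eq_abs, abs_of_nonneg (sq_nonneg _)]
    exact this
  have hGi1 : IntervalIntegrable G volume 0 (2*s) := by
    apply hGint.mono_set
    rw [Set.uIcc_of_le (by linarith : (0:ℝ) ≤ 2*s), Set.uIcc_of_le hπ.le]
    exact Set.Icc_subset_Icc le_rfl (by linarith)
  have hGi2 : IntervalIntegrable G volume (2*s) π := by
    apply hGint.mono_set
    rw [Set.uIcc_of_le (by linarith : 2*s ≤ π), Set.uIcc_of_le hπ.le]
    exact Set.Icc_subset_Icc (by linarith) le_rfl
  have hsplit : (∫ θ in (0:ℝ)..π, G θ) =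
      (∫ θ in (0:ℝ)..(2*s), G θ) + ∫ θ in (2*s)..π, G θ :=
    (intervalIntegral.integral_add_adjacent_intervals hGi1 hGi2).symm
  have hC1 : Continuous fun θ : ℝ => Real.cos (α₀*(x*Real.sin (θ/2)))^2 := by fun_prop
  have hT1 : (∫ θ in (0:ℝ)..(2*s), G θ)
      ≤ ∫ θ in (0:ℝ)..(2*s), Real.cos (α₀*(x*Real.sin (θ/2)))^2 := by
    apply intervalIntegral.integral_mono_on (by linarith) hGi1 (hC1.intervalIntegrable _ _)
    intro θ hθ
    obtain ⟨hθ0, hθ2s⟩ := hθ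
    have hhalf0 : 0 ≤ θ/2 := by linarith
    have hhalfs : θ/2 ≤ s := by linarith
    have hsin2 : 0 ≤ Real.sin (θ/2) :=
      Real.sin_nonneg_of_nonneg_of_le_pi hhalf0 (by linarith)
    have hsle : Real.sin (θ/2) ≤ u := by
      rw [← hsin]
      exact Real.strictMonoOn_sin.monotoneOn ⟨by linarith, by linarith⟩
        ⟨by linarith, hs2⟩ hhalfs
    have ht0 : 0 ≤ x * Real.sin (θ/2) := mul_nonneg hx0.le hsin2
    show (2 * besselJ 1 (x * Real.sin (θ / 2)) / (x * Real.sin (θ / 2))) ^ 2 ≤ _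
    rcases eq_or_lt_of_le ht0 with h | h
    · rw [← h, div_zero]
      norm_num
    · have htx₀ : x * Real.sin (θ/2) ≤ x₀ := by
        calc x * Real.sin (θ/2) ≤ x * u := mul_le_mul_of_nonneg_left hsle hx0.le
        _ = x₀ := hxu
      exact h₁ _ h htx₀
  have hcos2 : (∫ θ in (0:ℝ)..(2*s), Real.cos (α₀*(x*Real.sin (θ/2)))^2)
      = s + (1/2) * ∫ θ in (0:ℝ)..(2*s), Real.cos (2*(α₀*(x*Real.sin (θ/2)))) := by
    rw [intervalIntegral.integral_congr
      (g := fun θ => 1/2 + Real.cos (2*(α₀*(x*Real.sin (θ/2))))/2)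
      (fun θ _ => Real.cos_sq _)]
    rw [intervalIntegral.integral_add intervalIntegrable_const
      ((by fun_prop : Continuous fun θ:ℝ =>
        Real.cos (2*(α₀*(x*Real.sin (θ/2))))/2).intervalIntegrable _ _)]
    rw [intervalIntegral.integral_const, intervalIntegral.integral_div]
    simp [smul_eq_mul]
    ring
  have hcosmono : (∫ θ in (0:ℝ)..(2*s), Real.cos (2*(α₀*(x*Real.sin (θ/2)))))
      ≤ ∫ θ in (0:ℝ)..(2*s), (Real.cos (α₀*x*θ) + α₀*x*θ^3/16) := by
    apply intervalIntegral.integral_mono_on (by linarith)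
      ((by fun_prop : Continuous fun θ:ℝ =>
        Real.cos (2*(α₀*(x*Real.sin (θ/2))))).intervalIntegrable _ _)
      ((by fun_prop : Continuous fun θ:ℝ =>
        Real.cos (α₀*x*θ) + α₀*x*θ^3/16).intervalIntegrable _ _)
    rintro θ ⟨hθ0, hθ2s⟩
    have hhalf1 : θ/2 ≤ 1 := by linarith
    have hsinle : Real.sin (θ/2) ≤ θ/2 := Real.sin_le (by linarith)
    have hcube : θ/2 - (θ/2)^3/4 ≤ Real.sin (θ/2) := sub_cube_le_sin (by linarith) hhalf1
    have habs := my_abs_cos_sub_cos (2*(α₀*(x*Real.sin (θ/2)))) (α₀*x*θ)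
    have hax : 0 < α₀ * x := mul_pos hα₀ hx0
    have harg : |2*(α₀*(x*Real.sin (θ/2))) - α₀*x*θ| ≤ α₀*x*θ^3/16 := by
      rw [abs_of_nonpos (by nlinarith)]
      nlinarith [mul_le_mul_of_nonneg_left hcube (by positivity : (0:ℝ) ≤ 2*α₀*x)]
    have h5 := le_trans (le_trans (le_abs_self _) habs) harg
    linarith
  have hcosadd : (∫ θ in (0:ℝ)..(2*s), (Real.cos (α₀*x*θ) + α₀*x*θ^3/16))
      = Real.sin (α₀*x*(2*s))/(α₀*x) + α₀*x*(2*s)^4/64 := by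
    rw [intervalIntegral.integral_add
      ((by fun_prop : Continuous fun θ:ℝ => Real.cos (α₀*x*θ)).intervalIntegrable _ _)
      ((by fun_prop : Continuous fun θ:ℝ => α₀*x*θ^3/16).intervalIntegrable _ _)]
    have hc : (α₀*x) ≠ 0 := by positivity
    congr 1
    · rw [intervalIntegral.integral_comp_mul_left (fun y => Real.cos y) hc]
      simp [integral_cos, smul_eq_mul]
      field_simp
    · rw [intervalIntegral.integral_congr (g := fun θ => (α₀*x/16) * θ^3)
        (fun θ _ => by ring)]
      rw [intervalIntegral.integral_const_mul, integral_pow]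
      norm_num
      ring
  have hsge : ∀ θ ∈ Set.Icc (2*s) π, u ≤ Real.sin (θ/2) := by
    intro θ hθ
    obtain ⟨hθ1, hθ2⟩ := hθ
    rw [← hsin]
    exact Real.strictMonoOn_sin.monotoneOn ⟨by linarith, hs2⟩
      ⟨by linarith, by linarith⟩ (by linarith)
  have hsd : 0 < Real.sin (δ/2) := Real.sin_pos_of_pos_of_lt_pi (by linarith) (by linarith)
  have hTcont : ContinuousOn (fun θ : ℝ => 8/(π*(x*Real.sin (θ/2))^3)) (Set.uIcc (2*s) π) := by
    rw [Set.uIcc_of_le (by linarith)]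
    apply ContinuousOn.div continuousOn_const (by fun_prop)
    intro θ hθ
    have := lt_of_lt_of_le hu0 (hsge θ hθ)
    positivity
  have hT2 : (∫ θ in (2*s)..π, G θ) ≤ ∫ θ in (2*s)..π, 8/(π*(x*Real.sin (θ/2))^3) := by
    apply intervalIntegral.integral_mono_on (by linarith) hGi2 hTcont.intervalIntegrable
    intro θ hθ
    have h4 : x₀ ≤ x * Real.sin (θ/2) := by
      rw [← hxu]
      exact mul_le_mul_of_nonneg_left (hsge θ hθ) hx0.le
    exact h₂ _ h4
  have htail_eq : (∫ θ in (2*s)..π, 8/(π*(x*Real.sin (θ/2))^3))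
      = (8/(π*x^3)) * ∫ θ in (2*s)..π, (Real.sin (θ/2)^3)⁻¹ := by
    rw [← intervalIntegral.integral_const_mul]
    apply intervalIntegral.integral_congr
    intro θ hθ
    rw [Set.uIcc_of_le (by linarith)] at hθ
    have hv : 0 < Real.sin (θ/2) := lt_of_lt_of_le hu0 (hsge θ hθ)
    have hvne : Real.sin (θ/2) ≠ 0 := hv.ne'
    field_simp
  have hIc1 : ContinuousOn (fun θ : ℝ => (Real.sin (θ/2)^3)⁻¹) (Set.Icc (2*s) π) := by
    apply ContinuousOn.inv₀ (by fun_prop)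
    intro θ hθ
    have := lt_of_lt_of_le hu0 (hsge θ hθ)
    positivity
  have hsub1 : Set.uIcc (2*s) δ ⊆ Set.Icc (2*s) π := by
    rw [Set.uIcc_of_le h2sδ]; exact Set.Icc_subset_Icc le_rfl hδπ
  have hsub2 : Set.uIcc δ π ⊆ Set.Icc (2*s) π := by
    rw [Set.uIcc_of_le hδπ]; exact Set.Icc_subset_Icc (by linarith) le_rfl
  have hsplit2 : (∫ θ in (2*s)..π, (Real.sin (θ/2)^3)⁻¹)
      = (∫ θ in (2*s)..δ, (Real.sin (θ/2)^3)⁻¹) + ∫ θ in δ..π, (Real.sin (θ/2)^3)⁻¹ :=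
    (intervalIntegral.integral_add_adjacent_intervals
      ((hIc1.mono hsub1).intervalIntegrable) ((hIc1.mono hsub2).intervalIntegrable)).symm
  set c : ℝ := 1 - δ^2/16 with hc_def
  have hc0 : 0 < c := by rw [hc_def]; nlinarith
  have hJ1 : (∫ θ in (2*s)..δ, (Real.sin (θ/2)^3)⁻¹)
      ≤ ∫ θ in (2*s)..δ, ((c*(θ/2))^3)⁻¹ := by
    apply intervalIntegral.integral_mono_on h2sδ ((hIc1.mono hsub1).intervalIntegrable)
    · apply ContinuousOn.intervalIntegrable
      apply ContinuousOn.inv₀ (by fun_prop)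
      intro θ hθ
      rw [Set.uIcc_of_le h2sδ] at hθ
      have hθ0 : 0 < θ := lt_of_lt_of_le (by linarith) hθ.1
      positivity
    · intro θ hθ
      obtain ⟨hθ1, hθ2⟩ := hθ
      have hθ0 : 0 < θ := lt_of_lt_of_le (by linarith) hθ1
      have hh1 : θ/2 ≤ 1 := by linarith
      have hlow : c*(θ/2) ≤ Real.sin (θ/2) := by
        have := sub_cube_le_sin (t := θ/2) (by linarith) hh1
        rw [hc_def]
        nlinarith [mul_nonneg (by nlinarith : (0:ℝ) ≤ δ^2/4 - (θ/2)^2)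
          (by linarith : (0:ℝ) ≤ θ/2)]
      have hpos : 0 < c*(θ/2) := by positivity
      exact inv_anti₀ (by positivity) (pow_le_pow_left₀ hpos.le hlow 3)
  have hFTC : (∫ θ in (2*s)..δ, (θ^3)⁻¹) = (-(δ^2)⁻¹/2) - (-(((2*s)^2)⁻¹)/2) := by
    apply intervalIntegral.integral_eq_sub_of_hasDerivAt
    · intro t ht
      rw [Set.uIcc_of_le h2sδ] at ht
      have ht0 : 0 < t := lt_of_lt_of_le (by linarith) ht.1
      have hd1 : HasDerivAt (fun y:ℝ => y^2) (2*t) t := by simpa using hasDerivAt_pow 2 t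
      have hd2 := ((hd1.inv (by positivity)).div_const 2).neg
      convert hd2 using 1
      · funext y; simp only [Pi.neg_apply, Pi.inv_apply]; ring
      · have ht' : t ≠ 0 := ht0.ne'
        rw [show -(-(2 * t) / (t ^ 2) ^ 2 / 2) = t / t ^ 4 by ring]
        rw [inv_eq_one_div, div_eq_div_iff (pow_ne_zero 3 ht') (pow_ne_zero 4 ht')]
        ring
    · apply ContinuousOn.intervalIntegrable
      apply ContinuousOn.inv₀ (by fun_prop)
      intro t ht
      rw [Set.uIcc_of_le h2sδ] at ht
      have : 0 < t := lt_of_lt_of_le (by linarith) ht.1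
      positivity
  have hJ1eval : (∫ θ in (2*s)..δ, ((c*(θ/2))^3)⁻¹)
      = (c^3)⁻¹ * 8 * ((-(δ^2)⁻¹/2) - (-(((2*s)^2)⁻¹)/2)) := by
    rw [← hFTC, ← intervalIntegral.integral_const_mul]
    apply intervalIntegral.integral_congr
    intro θ hθ
    rw [Set.uIcc_of_le h2sδ] at hθ
    have hθ0 : 0 < θ := lt_of_lt_of_le (by linarith) hθ.1
    have hθne : θ ≠ 0 := hθ0.ne'
    have hcne : c ≠ 0 := hc0.ne'
    field_simp
    ring
  have hinv : (1:ℝ)/s^2 ≤ x^2/x₀^2 := by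
    rw [div_le_div_iff₀ (by positivity) (by positivity)]
    have h9 : x₀ ≤ x * s := by
      rw [← hxu]; exact mul_le_mul_of_nonneg_left hus hx0.le
    nlinarith
  have hJ1b : (∫ θ in (2*s)..δ, (Real.sin (θ/2)^3)⁻¹) ≤ (c^3)⁻¹ * (x^2/x₀^2) := by
    refine le_trans (hJ1.trans_eq hJ1eval) ?_
    have hcpos : 0 < (c^3)⁻¹ := by positivity
    have hδpos : 0 < (δ^2)⁻¹ := by positivity
    have he1 : (c^3)⁻¹ * 8 * ((-(δ^2)⁻¹/2) - (-(((2*s)^2)⁻¹)/2))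
        = (c^3)⁻¹ * (1/s^2) - (c^3)⁻¹*4*(δ^2)⁻¹ := by
      have hsne : s ≠ 0 := hs0.ne'
      have hδne : δ ≠ 0 := hδ.ne'
      field_simp
      ring
    rw [he1]
    have := mul_le_mul_of_nonneg_left hinv hcpos.le
    nlinarith [mul_pos (mul_pos hcpos (by norm_num : (0:ℝ) < 4)) hδpos]
  have hJ2 : (∫ θ in δ..π, (Real.sin (θ/2)^3)⁻¹) ≤ π * (Real.sin (δ/2)^3)⁻¹ := by
    calc (∫ θ in δ..π, (Real.sin (θ/2)^3)⁻¹) ≤ ∫ _θ in δ..π, (Real.sin (δ/2)^3)⁻¹ := by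
          apply intervalIntegral.integral_mono_on hδπ
            ((hIc1.mono hsub2).intervalIntegrable) intervalIntegrable_const
          intro θ hθ
          have h8 : Real.sin (δ/2) ≤ Real.sin (θ/2) := by
            apply Real.strictMonoOn_sin.monotoneOn ⟨by linarith, by linarith⟩
              ⟨by linarith [hθ.1], by linarith [hθ.2]⟩ (by linarith [hθ.1])
          exact inv_anti₀ (by positivity) (pow_le_pow_left₀ hsd.le h8 3)
      _ = (π - δ) * (Real.sin (δ/2)^3)⁻¹ := by
          rw [intervalIntegral.integral_const]; simp [smul_eq_mul]
      _ ≤ π * (Real.sin (δ/2)^3)⁻¹ := by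
          apply mul_le_mul_of_nonneg_right (by linarith) (by positivity)
  -- assembly
  have hT1tot : (∫ θ in (0:ℝ)..(2*s), G θ)
      ≤ s + (1/2)*(Real.sin (α₀*x*(2*s))/(α₀*x) + α₀*x*(2*s)^4/64) := by
    refine le_trans (hT1.trans_eq hcos2) ?_
    have := mul_le_mul_of_nonneg_left hcosmono (by norm_num : (0:ℝ) ≤ 1/2)
    rw [hcosadd] at this
    linarith
  have hT2tot : (∫ θ in (2*s)..π, G θ)
      ≤ (8/(π*x^3)) * ((c^3)⁻¹*(x^2/x₀^2) + π*(Real.sin (δ/2)^3)⁻¹) := by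
    refine le_trans (hT2.trans_eq htail_eq) ?_
    rw [hsplit2]
    exact mul_le_mul_of_nonneg_left (add_le_add hJ1b hJ2) (by positivity)
  have hIneq : x * ∫ θ in (0:ℝ)..π, G θ
      ≤ x * ((s + (1/2)*(Real.sin (α₀*x*(2*s))/(α₀*x) + α₀*x*(2*s)^4/64))
        + (8/(π*x^3)) * ((c^3)⁻¹*(x^2/x₀^2) + π*(Real.sin (δ/2)^3)⁻¹)) := by
    rw [hsplit]
    exact mul_le_mul_of_nonneg_left (add_le_add hT1tot hT2tot) hx0.le
  have hSid : sidelobeIntegral x = (1/π) * ∫ θ in (0:ℝ)..π, G θ := rfl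
  rw [hSid]
  have harg2 : α₀*x*(2*s) = 2*α₀*(x*Real.arcsin (x₀/x)) := by rw [hs_def, hu_def]; ring
  calc x * ((1/π) * ∫ θ in (0:ℝ)..π, G θ) = (1/π) * (x * ∫ θ in (0:ℝ)..π, G θ) := by ring
    _ ≤ (1/π) * (x * ((s + (1/2)*(Real.sin (α₀*x*(2*s))/(α₀*x) + α₀*x*(2*s)^4/64))
        + (8/(π*x^3)) * ((c^3)⁻¹*(x^2/x₀^2) + π*(Real.sin (δ/2)^3)⁻¹))) :=
      mul_le_mul_of_nonneg_left hIneq (by positivity)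
    _ = Abound x₀ α₀ δ x := by
      rw [assemble π α₀ x x₀ s ((c^3)⁻¹) (Real.sin (α₀*x*(2*s))) ((Real.sin (δ/2)^3)⁻¹)
        hπ.ne' hx0.ne' hα₀.ne' hx₀.ne']
      simp only [Abound, Bfun]
      rw [show Real.arcsin (x₀/x) = s from by rw [hs_def, hu_def]]
      rw [show (1:ℝ)-δ^2/16 = c from hc_def.symm]
      rw [show 2*α₀*(x*s) = α₀*x*(2*s) by ring]

lemma tendsto_mul_arcsin (x₀ : ℝ) (hx₀ : 0 < x₀) :
    Filter.Tendsto (fun x : ℝ => x * Real.arcsin (x₀ / x)) Filter.atTop (nhds x₀) := by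
  have hd : HasDerivAt Real.arcsin 1 0 := by
    have := Real.hasDerivAt_arcsin (by norm_num : (0:ℝ) ≠ -1) (by norm_num : (0:ℝ) ≠ 1)
    simpa using this
  have hslope : Tendsto (slope Real.arcsin 0) (nhdsWithin 0 {(0:ℝ)}ᶜ) (nhds 1) :=
    hasDerivAt_iff_tendsto_slope.mp hd
  have hu : Tendsto (fun x : ℝ => x₀ / x) atTop (nhdsWithin 0 {(0:ℝ)}ᶜ) := by
    apply tendsto_nhdsWithin_of_tendsto_nhds_of_eventually_within
    · simpa [div_eq_mul_inv] using tendsto_inv_atTop_zero.const_mul x₀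
    · filter_upwards [eventually_gt_atTop (0:ℝ)] with x hx
      exact (div_pos hx₀ hx).ne'
  have h2 : Tendsto (fun x : ℝ => x₀ * slope Real.arcsin 0 (x₀ / x)) atTop (nhds (x₀ * 1)) :=
    (hslope.comp hu).const_mul x₀
  rw [mul_one] at h2
  apply h2.congr'
  filter_upwards [eventually_gt_atTop (0:ℝ)] with x hx
  rw [slope_def_field]
  have hx₀' : x₀ ≠ 0 := hx₀.ne'
  simp only [Real.arcsin_zero, sub_zero]
  field_simp

lemma tendsto_Abound (x₀ α₀ δ : ℝ) (hx₀ : 0 < x₀) (hα₀ : 0 < α₀) :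
    Filter.Tendsto (Abound x₀ α₀ δ) Filter.atTop
      (nhds ((1/π) * (x₀ + Real.sin (2*α₀*x₀)/(2*α₀) + 8*(((1-δ^2/16)^3)⁻¹)/(π*x₀^2)))) := by
  have hB : Tendsto (Bfun x₀) atTop (nhds x₀) := tendsto_mul_arcsin x₀ hx₀
  have hsin : Tendsto (fun x => Real.sin (2*α₀*Bfun x₀ x)/(2*α₀)) atTop
      (nhds (Real.sin (2*α₀*x₀)/(2*α₀))) :=
    ((Real.continuous_sin.tendsto _).comp (hB.const_mul (2*α₀))).div_const _
  have hinv2 : Tendsto (fun x:ℝ => (x^2)⁻¹) atTop (nhds 0) :=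
    (tendsto_pow_atTop (by norm_num : 2 ≠ 0)).inv_tendsto_atTop
  have h3 : Tendsto (fun x => α₀*(Bfun x₀ x)^4/(8*x^2)) atTop (nhds 0) := by
    have h := (((hB.pow 4).const_mul α₀).div_const 8).mul hinv2
    rw [mul_zero] at h
    apply h.congr
    intro x
    ring
  have h5 : Tendsto (fun x:ℝ => 8*(Real.sin (δ/2)^3)⁻¹/x^2) atTop (nhds 0) := by
    have h := hinv2.const_mul (8*(Real.sin (δ/2)^3)⁻¹)
    rw [mul_zero] at h
    apply h.congr
    intro x
    ring
  have htot := ((((hB.add hsin).add h3).add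
    (tendsto_const_nhds (x := 8*(((1-δ^2/16)^3)⁻¹)/(π*x₀^2)))).add h5).const_mul (1/π)
  simp only [add_zero] at htot
  exact htot.congr (fun x => by simp only [Abound])

lemma sidelobe_nonneg (x : ℝ) : 0 ≤ sidelobeIntegral x := by
  apply mul_nonneg (by positivity)
  exact intervalIntegral.integral_nonneg Real.pi_pos.le (fun u _ => sq_nonneg _)

/-- If `(2J₁(t)/t)² ≤ cos²(α₀t)` on `(0, x₀]` and `(2J₁(t)/t)² ≤ 8/(πt³)` on
`[x₀, ∞)`, then `limsup_{x→∞} x·S(x) ≤ (1/π)(x₀ + sin(2α₀x₀)/(2α₀) + 8/(πx₀²))`; in particular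
there are `c₀ > 0` and `X₀ > 0` with `S(x) ≤ c₀/x` for all `x ≥ X₀`. -/
theorem sidelobeIntegral_asymptotic_bound (x₀ α₀ : ℝ) (hx₀ : 0 < x₀) (hα₀ : 0 < α₀)
    (h₁ : ∀ t : ℝ, 0 < t → t ≤ x₀ → (2 * besselJ 1 t / t) ^ 2 ≤ Real.cos (α₀ * t) ^ 2)
    (h₂ : ∀ t : ℝ, x₀ ≤ t → (2 * besselJ 1 t / t) ^ 2 ≤ 8 / (π * t ^ 3)) :
    limsup (fun x : ℝ => x * sidelobeIntegral x) atTop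
        ≤ (1 / π) * (x₀ + Real.sin (2 * α₀ * x₀) / (2 * α₀) + 8 / (π * x₀ ^ 2))
      ∧ ∃ c₀ > (0:ℝ), ∃ X₀ > (0:ℝ), ∀ x ≥ X₀, sidelobeIntegral x ≤ c₀ / x := by
  have hπ : (0:ℝ) < π := Real.pi_pos
  have hkey : ∀ δ : ℝ, 0 < δ → δ ≤ 1 →
      ∀ᶠ x in atTop, x * sidelobeIntegral x ≤ Abound x₀ α₀ δ x := by
    intro δ hδ hδ1
    have h0 : Tendsto (fun x:ℝ => x₀/x) atTop (nhds 0) := by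
      simpa [div_eq_mul_inv] using tendsto_inv_atTop_zero.const_mul x₀
    have ht : Tendsto (fun x:ℝ => 2 * Real.arcsin (x₀/x)) atTop (nhds 0) := by
      have h1' := (Real.continuous_arcsin.tendsto 0).comp h0
      have h2' := h1'.const_mul 2
      simpa using h2'
    filter_upwards [eventually_ge_atTop x₀, ht.eventually_lt_const hδ] with x hx1 hx2
    exact key x₀ α₀ δ hx₀ hα₀ hδ hδ1 h₁ h₂ x hx1 hx2.le
  have hcob : IsCoboundedUnder (· ≤ ·) atTop (fun x : ℝ => x * sidelobeIntegral x) := by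
    refine isCoboundedUnder_le_of_eventually_le atTop (x := 0) ?_
    filter_upwards [eventually_ge_atTop (0:ℝ)] with x hx
    exact mul_nonneg hx (sidelobe_nonneg x)
  have hLδ : ∀ δ : ℝ, 0 < δ → δ ≤ 1 →
      limsup (fun x : ℝ => x * sidelobeIntegral x) atTop
        ≤ (1/π) * (x₀ + Real.sin (2*α₀*x₀)/(2*α₀) + 8*(((1-δ^2/16)^3)⁻¹)/(π*x₀^2)) := by
    intro δ hδ hδ1
    have hA := tendsto_Abound x₀ α₀ δ hx₀ hα₀
    exact le_trans (limsup_le_limsup (hkey δ hδ hδ1) hcob hA.isBoundedUnder_le)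
      (le_of_eq hA.limsup_eq)
  constructor
  · have hc : ContinuousAt (fun δ : ℝ =>
        (1/π) * (x₀ + Real.sin (2*α₀*x₀)/(2*α₀) + 8*(((1-δ^2/16)^3)⁻¹)/(π*x₀^2))) 0 := by
      apply ContinuousAt.mul continuousAt_const
      apply ContinuousAt.add continuousAt_const
      apply ContinuousAt.div ?_ continuousAt_const (by positivity)
      exact ContinuousAt.mul continuousAt_const (ContinuousAt.inv₀ (by fun_prop) (by norm_num))
    have hclim : Tendsto (fun δ : ℝ =>
        (1/π) * (x₀ + Real.sin (2*α₀*x₀)/(2*α₀) + 8*(((1-δ^2/16)^3)⁻¹)/(π*x₀^2)))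
        (nhdsWithin 0 (Set.Ioi 0))
        (nhds ((1/π) * (x₀ + Real.sin (2*α₀*x₀)/(2*α₀) + 8/(π*x₀^2)))) := by
      have h := hc.tendsto.mono_left (nhdsWithin_le_nhds (s := Set.Ioi (0:ℝ)))
      convert h using 2
      norm_num
    apply ge_of_tendsto hclim
    filter_upwards [Ioc_mem_nhdsGT_of_mem (Set.left_mem_Ico.mpr zero_lt_one)] with δ hδ
    exact hLδ δ hδ.1 hδ.2
  · have hA := tendsto_Abound x₀ α₀ 1 hx₀ hα₀
    set c1 : ℝ := (1/π) * (x₀ + Real.sin (2*α₀*x₀)/(2*α₀) + 8*(((1-(1:ℝ)^2/16)^3)⁻¹)/(π*x₀^2))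
      with hc1
    have hev : ∀ᶠ x in atTop, x * sidelobeIntegral x ≤ c1 + 1 := by
      filter_upwards [hkey 1 one_pos le_rfl, hA.eventually_lt_const (lt_add_one c1)] with x hx1 hx2
      exact hx1.trans hx2.le
    obtain ⟨X, hX⟩ := eventually_atTop.mp hev
    refine ⟨max (c1+1) 1, lt_of_lt_of_le one_pos (le_max_right _ _),
      max X 1, lt_of_lt_of_le one_pos (le_max_right _ _), ?_⟩
    intro x hx
    have hx1 : (1:ℝ) ≤ x := le_trans (le_max_right X 1) hx
    have hx0 : 0 < x := lt_of_lt_of_le one_pos hx1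
    have h2 := hX x (le_trans (le_max_left X 1) hx)
    rw [le_div_iff₀ hx0]
    calc sidelobeIntegral x * x = x * sidelobeIntegral x := by ring
      _ ≤ c1 + 1 := h2
      _ ≤ max (c1+1) 1 := le_max_left _ _
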